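/- Let f, a : (0,∞) → ℝ be smooth solutions of the radial Ginzburg–Landau ODEs -f'' - f'/r + n²(1-a)²f/r² + (λ/2)(f²-1)f = 0 and -a'' + a'/r - f²(1-a) = 0, with 0 < f < 1, 0 < a < 1, f' > 0, a' > 0 on (0,∞). Define e(r) = f'(r) - n(1-a(r))f(r)/r. Then e satisfies the ODE -e'' - e'/r + α(r) e + (e(r)/f(r)) e'(r) = (1-λ) f(r)² f'(r), where α(r) = (1+n(1-a(r)))/r² · (1 + r f'(r)/f(r)) + f(r)² + n a'(r)/r. -/

import Mathlib

set_option maxHeartbeats 1000000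


open Set

/-- Auxiliary: the first derivative of `e(r) = f'(r) - n(1-a)f/r`, with `f''`
eliminated using the first ODE. -/
noncomputable def psiF (n : ℕ) (lam : ℝ) (f a : ℝ → ℝ) (x : ℝ) : ℝ :=
  -deriv f x / x + (n:ℝ)^2*(1-a x)^2*f x/x^2 + lam/2*((f x)^2-1)*f x
  + (n:ℝ)*deriv a x*f x/x - (n:ℝ)*(1-a x)*deriv f x/x + (n:ℝ)*(1-a x)*f x/x^2

/-- the quantity `e(r) = f'(r) - n(1-a(r))f(r)/r` built from the vortex
profiles satisfies the ODE
`-e'' - e'/r + α e + (e/f) e' = (1-λ) f² f'` with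
`α(r) = (1+n(1-a))/r² (1 + r f'/f) + f² + n a'/r`. -/
theorem stmt0 (n : ℕ) (hn : 0 < n) (lam : ℝ) (hlam : 0 < lam)
    (f a : ℝ → ℝ)
    (hf : ∀ r ∈ Ioi (0:ℝ), ContDiffAt ℝ (⊤ : ℕ∞) f r)
    (ha : ∀ r ∈ Ioi (0:ℝ), ContDiffAt ℝ (⊤ : ℕ∞) a r)
    (hf01 : ∀ r ∈ Ioi (0:ℝ), 0 < f r ∧ f r < 1)
    (ha01 : ∀ r ∈ Ioi (0:ℝ), 0 < a r ∧ a r < 1)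
    (hf' : ∀ r ∈ Ioi (0:ℝ), 0 < deriv f r)
    (ha' : ∀ r ∈ Ioi (0:ℝ), 0 < deriv a r)
    (hode1 : ∀ r ∈ Ioi (0:ℝ),
      -(deriv (deriv f) r) - deriv f r / r
        + (n:ℝ)^2 * (1 - a r)^2 * f r / r^2
        + lam / 2 * ((f r)^2 - 1) * f r = 0)
    (hode2 : ∀ r ∈ Ioi (0:ℝ),
      -(deriv (deriv a) r) + deriv a r / r - (f r)^2 * (1 - a r) = 0) :
    ∀ r ∈ Ioi (0:ℝ),
      -(deriv (deriv (fun s => deriv f s - (n:ℝ) * (1 - a s) * f s / s)) r)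
        - deriv (fun s => deriv f s - (n:ℝ) * (1 - a s) * f s / s) r / r
        + ((1 + (n:ℝ) * (1 - a r)) / r^2 * (1 + r * deriv f r / f r)
            + (f r)^2 + (n:ℝ) * deriv a r / r)
          * (deriv f r - (n:ℝ) * (1 - a r) * f r / r)
        + ((deriv f r - (n:ℝ) * (1 - a r) * f r / r) / f r)
          * deriv (fun s => deriv f s - (n:ℝ) * (1 - a s) * f s / s) r
      = (1 - lam) * (f r)^2 * deriv f r := by
  -- smoothness infrastructure
  have hfC : ContDiffOn ℝ ((⊤:ℕ∞) : WithTop ℕ∞) f (Ioi 0) := fun x hx =>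
    ((hf x hx).of_le (by simp)).contDiffWithinAt
  have haC : ContDiffOn ℝ ((⊤:ℕ∞) : WithTop ℕ∞) a (Ioi 0) := fun x hx =>
    ((ha x hx).of_le (by simp)).contDiffWithinAt
  have hinf : ((⊤:ℕ∞) : WithTop ℕ∞) + 1 ≤ ((⊤:ℕ∞) : WithTop ℕ∞) := le_of_eq (by rfl)
  have hfC1 : ContDiffOn ℝ ((⊤:ℕ∞) : WithTop ℕ∞) (deriv f) (Ioi 0) :=
    hfC.deriv_of_isOpen isOpen_Ioi hinf
  have haC1 : ContDiffOn ℝ ((⊤:ℕ∞) : WithTop ℕ∞) (deriv a) (Ioi 0) :=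
    haC.deriv_of_isOpen isOpen_Ioi hinf
  have hone : (1 : WithTop ℕ∞) ≤ ((⊤:ℕ∞) : WithTop ℕ∞) := by
    exact_mod_cast le_top
  have hfD : ∀ x ∈ Ioi (0:ℝ), HasDerivAt f (deriv f x) x := fun x hx =>
    (((hfC x hx).contDiffAt (isOpen_Ioi.mem_nhds hx)).differentiableAt (zero_lt_one.trans_le hone).ne').hasDerivAt
  have haD : ∀ x ∈ Ioi (0:ℝ), HasDerivAt a (deriv a x) x := fun x hx =>
    (((haC x hx).contDiffAt (isOpen_Ioi.mem_nhds hx)).differentiableAt (zero_lt_one.trans_le hone).ne').hasDerivAt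
  have hfD2 : ∀ x ∈ Ioi (0:ℝ), HasDerivAt (deriv f) (deriv (deriv f) x) x := fun x hx =>
    (((hfC1 x hx).contDiffAt (isOpen_Ioi.mem_nhds hx)).differentiableAt (zero_lt_one.trans_le hone).ne').hasDerivAt
  have haD2 : ∀ x ∈ Ioi (0:ℝ), HasDerivAt (deriv a) (deriv (deriv a) x) x := fun x hx =>
    (((haC1 x hx).contDiffAt (isOpen_Ioi.mem_nhds hx)).differentiableAt (zero_lt_one.trans_le hone).ne').hasDerivAt
  -- the first derivative of e
  have hgd : ∀ x ∈ Ioi (0:ℝ),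
      HasDerivAt (fun s => deriv f s - (n:ℝ) * (1 - a s) * f s / s) (psiF n lam f a x) x := by
    intro x hx
    have hx0 : x ≠ 0 := ne_of_gt hx
    have H := (hfD2 x hx).sub
      (((((hasDerivAt_const x (1:ℝ)).sub (haD x hx)).const_mul (n:ℝ)).mul (hfD x hx)).div
        (hasDerivAt_id x) hx0)
    refine H.congr_deriv ?_
    have h1 := hode1 x hx
    have hF2 : deriv (deriv f) x = -(deriv f x / x) + (n:ℝ)^2 * (1 - a x)^2 * f x / x^2
        + lam / 2 * ((f x)^2 - 1) * f x := by linarith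
    rw [hF2]
    unfold psiF
    norm_num only [id, Pi.sub_apply, Pi.mul_apply, Pi.pow_apply, Pi.neg_apply, Pi.div_apply, Nat.cast_ofNat]
    field_simp
    ring
  intro r hr
  have hr0 : r ≠ 0 := ne_of_gt hr
  have hfr0 : f r ≠ 0 := (hf01 r hr).1.ne'
  -- second derivative via psiF
  have key2 : deriv (deriv (fun s => deriv f s - (n:ℝ) * (1 - a s) * f s / s)) r
      = deriv (psiF n lam f a) r :=
    Filter.EventuallyEq.deriv_eq
      (Filter.eventuallyEq_of_mem (isOpen_Ioi.mem_nhds hr) (fun x hx => (hgd x hx).deriv))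
  have hPsiD : HasDerivAt (psiF n lam f a)
      (-(deriv (deriv f) r)/r + deriv f r/r^2
        + (n:ℝ)^2 * ((deriv f r*(1-a r)^2 - 2*deriv a r*(1-a r)*f r)/r^2
            - 2*(1-a r)^2*f r/r^3)
        + lam/2*(3*(f r)^2-1)*deriv f r
        + (n:ℝ) * ((deriv (deriv a) r*f r + deriv a r*deriv f r)/r - deriv a r*f r/r^2)
        - (n:ℝ) * ((deriv (deriv f) r*(1-a r) - deriv a r*deriv f r)/r - (1-a r)*deriv f r/r^2)
        + (n:ℝ) * ((deriv f r*(1-a r) - deriv a r*f r)/r^2 - 2*(1-a r)*f r/r^3)) r := by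
    have c1 := ((hfD2 r hr).neg).div (hasDerivAt_id r) hr0
    have c2 := (((((hasDerivAt_const r (1:ℝ)).sub (haD r hr)).pow 2).const_mul ((n:ℝ)^2)).mul
      (hfD r hr)).div (hasDerivAt_pow 2 r) (pow_ne_zero 2 hr0)
    have c3 := ((((hfD r hr).pow 2).sub_const 1).const_mul (lam/2)).mul (hfD r hr)
    have c4 := (((haD2 r hr).const_mul (n:ℝ)).mul (hfD r hr)).div (hasDerivAt_id r) hr0
    have c5 := ((((hasDerivAt_const r (1:ℝ)).sub (haD r hr)).const_mul (n:ℝ)).mul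
      (hfD2 r hr)).div (hasDerivAt_id r) hr0
    have c6 := ((((hasDerivAt_const r (1:ℝ)).sub (haD r hr)).const_mul (n:ℝ)).mul
      (hfD r hr)).div (hasDerivAt_pow 2 r) (pow_ne_zero 2 hr0)
    have H := ((((c1.add c2).add c3).add c4).sub c5).add c6
    unfold psiF
    refine H.congr_deriv ?_
    norm_num only [id, Pi.sub_apply, Pi.mul_apply, Pi.pow_apply, Pi.neg_apply, Pi.div_apply, Nat.cast_ofNat]
    field_simp
    ring
  rw [key2, hPsiD.deriv, (hgd r hr).deriv]
  have h1 := hode1 r hr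
  have h2 := hode2 r hr
  have hF2 : deriv (deriv f) r = -(deriv f r / r) + (n:ℝ)^2 * (1 - a r)^2 * f r / r^2
      + lam / 2 * ((f r)^2 - 1) * f r := by linarith
  have hA2 : deriv (deriv a) r = deriv a r / r - (f r)^2 * (1 - a r) := by linarith
  rw [hF2, hA2]
  unfold psiF
  field_simp
  ring
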